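/- Let T be a rooted tree with an arbitrary integer β(v) assigned to each vertex v, and assign to each vertex a rational function F(v,x) by the recursion F(v,x) = x - β(v) - ∑_{w child of v} 1/F(w,x). Then det(xI - A(T) - diag(β)) = det(xI + A(T) - diag(β)) = ∏_{v ∈ V(T)} F(v,x). -/

import Mathlib

open Polynomial

/-- A rooted tree on the vertex set `Fin (n+1)`, encoded by a parent function:
the root is `0`, and every non-root vertex has a parent strictly smaller than
itself (which guarantees acyclicity and connectedness). -/
structure ParentTree (n : ℕ) where
  parent : Fin (n + 1) → Fin (n + 1)
  parent_lt : ∀ i : Fin (n + 1), i ≠ 0 → parent i < i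
  parent_zero : parent 0 = 0

namespace ParentTree

variable {n : ℕ}

/-- The set of children of a vertex. -/
def children (T : ParentTree n) (v : Fin (n + 1)) : Finset (Fin (n + 1)) :=
  Finset.univ.filter fun w => T.parent w = v ∧ w ≠ v

/-- The adjacency matrix of a rooted tree, with entries in `R`. -/
def adjMat (T : ParentTree n) (R : Type) [Zero R] [One R] :
    Matrix (Fin (n + 1)) (Fin (n + 1)) R :=
  Matrix.of fun i j => if i ≠ j ∧ (T.parent i = j ∨ T.parent j = i) then 1 else 0

/-- The degree of a vertex. -/
def deg (T : ParentTree n) (v : Fin (n + 1)) : ℕ :=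
  (T.children v).card + if v = 0 then 0 else 1

end ParentTree

/-!
Parents precede children in the numbering, so for a matrix `M` supported on the diagonal and the
tree edges, Gaussian elimination from the leaves upward factors `M` as
`U * diagonal F * Lᵀ` with `U`, `L` upper unitriangular, and the pivots are exactly
`F v = M v v - ∑_{w child of v} M v w * M w v / F w`; hence `det M = ∏ v, F v`.
For `M = x - B` with `B` constant these pivots are automatically nonzero in `K(x)`: by induction
from the leaves, each `F v` is `x` minus a constant minus terms of negative degree, so its
valuation at infinity is that of `x`. For `B = ±A(T) + diag β` each edge contributes
`M v w * M w v = (∓1)² = 1`, so both signs give the same recursion.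
-/

namespace ParentTree

variable {n : ℕ} (T : ParentTree n)

theorem mem_children {v w : Fin (n + 1)} : w ∈ T.children v ↔ T.parent w = v ∧ w ≠ v := by
  simp [children]

theorem parent_le (v : Fin (n + 1)) : T.parent v ≤ v := by
  rcases eq_or_ne v 0 with rfl | hv
  · rw [T.parent_zero]
  · exact (T.parent_lt v hv).le

theorem lt_of_mem_children {v w : Fin (n + 1)} (h : w ∈ T.children v) : v < w := by
  obtain ⟨rfl, hne⟩ := T.mem_children.1 h
  exact lt_of_le_of_ne (T.parent_le w) hne.symm

theorem eq_of_mem_children_of_mem_children {u v w : Fin (n + 1)} (hu : w ∈ T.children u)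
    (hv : w ∈ T.children v) : u = v :=
  (T.mem_children.1 hu).1.symm.trans (T.mem_children.1 hv).1

theorem adjMat_apply (R : Type) [Zero R] [One R] (i j : Fin (n + 1)) :
    T.adjMat R i j = if j ∈ T.children i ∨ i ∈ T.children j then 1 else 0 := by
  simp only [adjMat, Matrix.of_apply, mem_children]
  congr 1
  grind

section Elimination

variable {K : Type*} [Field K] (M : Matrix (Fin (n + 1)) (Fin (n + 1)) K) (F : Fin (n + 1) → K)

open Matrix

def childRatio : Matrix (Fin (n + 1)) (Fin (n + 1)) K :=
  of fun i k => if k ∈ T.children i then M i k / F k else 0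

theorem det_one_add_childRatio : (1 + T.childRatio M F).det = 1 := by
  have h_upper : (1 + T.childRatio M F).IsUpperTriangular := fun i j hji => by
    have hj : j ∉ T.children i := fun h => (T.lt_of_mem_children h).not_gt hji
    simp only [Matrix.add_apply, one_apply_ne (show j < i from hji).ne', childRatio, of_apply,
      if_neg hj, add_zero]
  rw [det_of_isUpperTriangular h_upper]
  exact Finset.prod_eq_one fun i _ => by simp [childRatio, T.mem_children]

variable {F} (hF0 : ∀ v, F v ≠ 0)
include hF0

theorem childRatio_mul_diagonal_mul_transpose_apply (i j : Fin (n + 1)) :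
    (T.childRatio M F * diagonal F * (T.childRatio Mᵀ F)ᵀ) i j =
      if i = j then ∑ w ∈ T.children i, M i w * M w i / F w else 0 := by
  have h_term : ∀ w, (T.childRatio M F * diagonal F) i w * (T.childRatio Mᵀ F)ᵀ w j =
      if w ∈ T.children i then (if i = j then M i w * M w i / F w else 0) else 0 := by
    intro w
    by_cases hi : w ∈ T.children i
    · by_cases hij : i = j
      · subst hij
        rw [if_pos hi, if_pos rfl]
        simp only [mul_diagonal, childRatio, of_apply, transpose_apply, if_pos hi]
        rw [div_mul_cancel₀ _ (hF0 w), mul_div_assoc]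
      · have hj : w ∉ T.children j := fun hj => hij (T.eq_of_mem_children_of_mem_children hi hj)
        simp [childRatio, hi, hj, hij]
    · simp [childRatio, hi]
  rw [mul_apply]
  simp only [h_term, Finset.sum_ite_mem, Finset.univ_inter]
  split_ifs with hij
  · subst hij; simp
  · simp

variable (hM : ∀ i j, i ≠ j → j ∉ T.children i → i ∉ T.children j → M i j = 0)
  (hF : ∀ v, F v = M v v - ∑ w ∈ T.children v, M v w * M w v / F w)
include hM hF

theorem one_add_childRatio_mul_diagonal_mul :
    (1 + T.childRatio M F) * diagonal F * (1 + T.childRatio Mᵀ F)ᵀ = M := by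
  rw [transpose_add, transpose_one, add_mul, one_mul, mul_add, mul_one, add_mul]
  ext i j
  simp only [Matrix.add_apply, mul_diagonal, diagonal_mul,
    T.childRatio_mul_diagonal_mul_transpose_apply M hF0, transpose_apply, diagonal_apply]
  by_cases hij : i = j
  · subst hij
    simp [childRatio, T.mem_children, hF i]
  · simp only [hij, if_false, childRatio, of_apply, transpose_apply, zero_add, add_zero]
    by_cases hj : j ∈ T.children i
    · have hi : i ∉ T.children j := fun hi =>
        (T.lt_of_mem_children hj).not_gt (T.lt_of_mem_children hi)
      simp [hi, hj, div_mul_cancel₀ _ (hF0 j)]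
    by_cases hi : i ∈ T.children j
    · simp [hi, hj, mul_div_cancel₀ _ (hF0 i)]
    · simp [hi, hj, hM i j hij hj hi]

theorem det_eq_prod_of_recursion : M.det = ∏ v, F v := by
  rw [← T.one_add_childRatio_mul_diagonal_mul M hF0 hM hF, det_mul, det_mul, det_transpose,
    det_one_add_childRatio, det_one_add_childRatio, det_diagonal, one_mul, mul_one]

end Elimination

section RationalFunctions

variable {K : Type*} [Field K] (B : Matrix (Fin (n + 1)) (Fin (n + 1)) K)
  {F : Fin (n + 1) → RatFunc K}

open WithZero
open RatFunc hiding X C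

theorem inftyValuation_C_le_one [DecidableEq (RatFunc K)] (k : K) :
    inftyValuation K (RatFunc.C k) ≤ 1 := by
  rcases eq_or_ne k 0 with rfl | hk
  · simp
  · rw [inftyValuation.C K hk]

variable (hF : ∀ v, F v = RatFunc.X - RatFunc.C (B v v) -
    ∑ w ∈ T.children v, RatFunc.C (B v w * B w v) / F w)
include hF

theorem inftyValuation_eq_of_recursion [DecidableEq (RatFunc K)] (v : Fin (n + 1)) :
    inftyValuation K (F v) = exp 1 := by
  have h_one_lt : (1 : ℤᵐ⁰) < exp 1 := by rw [← exp_zero]; exact exp_lt_exp.2 one_pos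
  induction v using WellFoundedGT.induction with
  | _ v ih =>
  have h_sum : inftyValuation K (∑ w ∈ T.children v, RatFunc.C (B v w * B w v) / F w) < 1 := by
    refine Valuation.map_sum_lt _ one_ne_zero fun w hw => ?_
    rw [map_div₀, ih w (T.lt_of_mem_children hw), div_lt_one₀ (zero_lt_one.trans h_one_lt)]
    exact (inftyValuation_C_le_one _).trans_lt h_one_lt
  have h_small : inftyValuation K
      (RatFunc.C (B v v) + ∑ w ∈ T.children v, RatFunc.C (B v w * B w v) / F w) < exp 1 :=
    ((Valuation.map_add _ _ _).trans (max_le (inftyValuation_C_le_one _) h_sum.le)).trans_lt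
      h_one_lt
  rw [hF v, sub_sub, Valuation.map_sub_eq_of_lt_left _ (by rwa [inftyValuation.X]),
    inftyValuation.X]

theorem ne_zero_of_recursion (v : Fin (n + 1)) : F v ≠ 0 := by
  classical
  intro h
  have h_val := T.inftyValuation_eq_of_recursion B hF v
  rw [h, map_zero] at h_val
  exact exp_ne_zero h_val.symm

theorem algebraMap_charpoly_eq_prod
    (hB : ∀ i j, i ≠ j → j ∉ T.children i → i ∉ T.children j → B i j = 0) :
    algebraMap K[X] (RatFunc K) B.charpoly = ∏ v, F v := by
  rw [Matrix.charpoly, RingHom.map_det]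
  refine T.det_eq_prod_of_recursion _ (T.ne_zero_of_recursion B hF) (fun i j hij hj hi => ?_)
    fun v => ?_
  · simp [Matrix.charmatrix_apply_ne _ _ _ hij, hB i j hij hj hi]
  · have h_ne : ∀ w ∈ T.children v, v ≠ w := fun w hw => (T.lt_of_mem_children hw).ne
    simp only [RingHom.mapMatrix_apply, Matrix.map_apply, Matrix.charmatrix_apply_eq, map_sub,
      RatFunc.algebraMap_X, RatFunc.algebraMap_C]
    rw [hF v]
    refine congrArg _ (Finset.sum_congr rfl fun w hw => ?_)
    rw [Matrix.charmatrix_apply_ne _ _ _ (h_ne w hw),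
      Matrix.charmatrix_apply_ne _ _ _ (h_ne w hw).symm]
    simp

end RationalFunctions

theorem algebraMap_charpoly_smul_adjMat_add_diagonal {K : Type} [Field K] {ε : K}
    (hε : ε * ε = 1) (β : Fin (n + 1) → K) {F : Fin (n + 1) → RatFunc K}
    (hF : ∀ v, F v = RatFunc.X - RatFunc.C (β v) - ∑ w ∈ T.children v, (F w)⁻¹) :
    algebraMap K[X] (RatFunc K) (ε • T.adjMat K + Matrix.diagonal β).charpoly = ∏ v, F v := by
  set B := ε • T.adjMat K + Matrix.diagonal β
  have h_diag : ∀ v, B v v = β v := fun v => by simp [B, T.adjMat_apply, T.mem_children]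
  have h_edge : ∀ v, ∀ w ∈ T.children v, B v w * B w v = 1 := fun v w hw => by
    have h_ne := (T.lt_of_mem_children hw).ne
    simp [B, T.adjMat_apply, hw, h_ne, h_ne.symm, hε]
  refine T.algebraMap_charpoly_eq_prod B (fun v => ?_) fun i j hij hj hi => ?_
  · rw [h_diag, Finset.sum_congr rfl fun w hw => by rw [h_edge v w hw, map_one, one_div], ← hF v]
  · simp [B, T.adjMat_apply, hij, hj, hi]

end ParentTree

theorem stmt_6 {n : ℕ} (T : ParentTree n) (β : Fin (n + 1) → ℤ)
    (F : Fin (n + 1) → RatFunc ℚ)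
    (hF : ∀ v, F v = RatFunc.X - (β v : RatFunc ℚ) - ∑ w ∈ T.children v, (F w)⁻¹) :
    algebraMap (Polynomial ℚ) (RatFunc ℚ)
        (T.adjMat ℚ + Matrix.diagonal (fun v => (β v : ℚ))).charpoly = ∏ v, F v ∧
    algebraMap (Polynomial ℚ) (RatFunc ℚ)
        (-T.adjMat ℚ + Matrix.diagonal (fun v => (β v : ℚ))).charpoly = ∏ v, F v := by
  have hF' : ∀ v, F v = RatFunc.X - RatFunc.C (β v : ℚ) - ∑ w ∈ T.children v, (F w)⁻¹ :=
    fun v => by rw [hF v, map_intCast]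
  have h_plus := T.algebraMap_charpoly_smul_adjMat_add_diagonal (one_mul 1) _ hF'
  have h_minus := T.algebraMap_charpoly_smul_adjMat_add_diagonal (neg_one_mul (-1)) _ hF'
  rw [one_smul] at h_plus
  rw [neg_smul, one_smul] at h_minus
  exact ⟨h_plus, h_minus⟩
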